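/- Let m ≥ 2, let 1 ≤ p ≤ m − 1, let 0 ≤ r < k^p, set J = J(p,r), and let i ∈ J and j ∉ J be leaves. Then C_{ij} · (Σ_{u ∈ J} Σ_{v ∈ J} C_{uv}) = (Σ_{u ∈ J} C_{iu}) · (Σ_{u ∈ J} C_{ju}). (These algebraic identities encode that, for jointly normal leaves with covariance C, any leaf inside a subtree and any leaf outside it are conditionally independent given the subtree sum; they are exactly the conditional independence conditions of the conditional independent Gaussian tree.) -/

import Mathlib

open MeasureTheory ProbabilityTheory
open scoped Classical

/-- `lcaHeight k i j` is the height above the leaves of the lowest common ancestor of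
leaves `i` and `j` in the infinite `k`-ary tree: the least `l ≥ 1` with `⌊i/k^l⌋ = ⌊j/k^l⌋`. -/
noncomputable def lcaHeight (k i j : ℕ) : ℕ := sInf {l | 1 ≤ l ∧ i / k ^ l = j / k ^ l}

/-- The covariance matrix of the regular `(k,m)` conditionally independent Gaussian tree with
leaf standard deviation `σ` and dependency parameter `ρ`. -/
noncomputable def treeCov (k m : ℕ) (ρ σ : ℝ) : Matrix (Fin (k ^ m)) (Fin (k ^ m)) ℝ :=
  Matrix.of fun i j =>
    if (i : ℕ) = (j : ℕ) then σ ^ 2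
    else σ ^ 2 * ρ * (1 / (k : ℝ) + (1 - 1 / (k : ℝ)) * ρ) ^ (lcaHeight k i j - 1)

/-- `treeBlock k m p r` is the set `J(p,r)` of leaves of the regular `(k,m)` tree descending
from the `r`-th node at level `p`. -/
def treeBlock (k m p r : ℕ) : Finset (Fin (k ^ m)) :=
  Finset.univ.filter fun i => (i : ℕ) / k ^ (m - p) = r

/-!
Let `J = J(p,r)` be a full subtree of height `d = m - p`. Every leaf `u ∈ J` sees, at each
relative height `t + 1 ≤ d`, exactly `k ^ (t + 1) - k ^ t` leaves of `J` whose lowest common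
ancestor with `u` is at that height, so the row sum `∑_{v ∈ J} C_{uv}` is a constant `s`
independent of `u`. A leaf `j ∉ J` meets every leaf of `J` at the same ancestor above `J`, so
`C_{ju} = C_{ji}` for all `u ∈ J`. By symmetry of `C` both sides equal `|J| · s · C_{ij}`.
-/

open Finset

lemma div_pow_eq_div_pow_of_le {k a b l l' : ℕ} (h : l ≤ l') (hab : a / k ^ l = b / k ^ l) :
    a / k ^ l' = b / k ^ l' := by
  obtain ⟨t, rfl⟩ := Nat.exists_eq_add_of_le h
  rw [pow_add, ← Nat.div_div_eq_div_mul, ← Nat.div_div_eq_div_mul, hab]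

lemma lcaHeight_comm (k i j : ℕ) : lcaHeight k i j = lcaHeight k j i := by
  simp only [lcaHeight, eq_comm]

lemma lcaHeight_eq_succ {k i j l : ℕ} (h : i / k ^ (l + 1) = j / k ^ (l + 1))
    (hne : i / k ^ l ≠ j / k ^ l) : lcaHeight k i j = l + 1 :=
  (Nat.sInf_upward_closed_eq_succ_iff (s := {l | 1 ≤ l ∧ i / k ^ l = j / k ^ l})
    (fun _ _ hab ha => ⟨ha.1.trans hab, div_pow_eq_div_pow_of_le hab ha.2⟩) l).2
    ⟨⟨by omega, h⟩, fun hl => hne hl.2⟩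

lemma lcaHeight_eq_of_div_pow_eq {k d i j u : ℕ} (hu : u / k ^ d = i / k ^ d)
    (hj : j / k ^ d ≠ i / k ^ d) : lcaHeight k j u = lcaHeight k j i := by
  unfold lcaHeight
  congr 1
  ext l
  refine and_congr_right fun _ => ?_
  rcases le_total l d with hld | hdl
  · exact iff_of_false (fun h => hj (hu ▸ div_pow_eq_div_pow_of_le hld h))
      (fun h => hj (div_pow_eq_div_pow_of_le hld h))
  · rw [div_pow_eq_div_pow_of_le hdl hu]

lemma succ_div_mul_le_of_dvd {N n u : ℕ} (hu : u < N) (hn : n ∣ N) : (u / n + 1) * n ≤ N := by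
  obtain ⟨t, rfl⟩ := hn
  rcases n.eq_zero_or_pos with rfl | hn
  · simp
  have : u / n < t := (Nat.div_lt_iff_lt_mul hn).2 (by linarith)
  nlinarith

lemma card_filter_fin_div_eq {N n c : ℕ} (hn : 0 < n) (hc : (c + 1) * n ≤ N) :
    #{v : Fin N | (v : ℕ) / n = c} = n := by
  rw [← card_map Fin.valEmbedding]
  convert Nat.card_Ico (c * n) ((c + 1) * n) using 2
  · ext x
    simp only [mem_map, mem_filter, mem_univ, true_and, Fin.valEmbedding_apply, mem_Ico]
    constructor
    · rintro ⟨v, rfl, rfl⟩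
      exact ⟨Nat.div_mul_le_self _ _, (Nat.div_lt_iff_lt_mul hn).1 (Nat.lt_succ_self _)⟩
    · rintro ⟨h1, h2⟩
      refine ⟨⟨x, by linarith⟩, ?_, rfl⟩
      have := (Nat.le_div_iff_mul_le hn).2 h1
      have := (Nat.div_lt_iff_lt_mul hn).2 h2
      show x / n = c
      omega
  · rw [add_mul]; omega

/-- The leaves sharing with `u` their ancestor at height `l` above the leaves. -/
def ancestorBlock (k m l : ℕ) (u : Fin (k ^ m)) : Finset (Fin (k ^ m)) :=
  {v | (v : ℕ) / k ^ l = (u : ℕ) / k ^ l}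

section AncestorBlock

variable {k m : ℕ}

@[simp]
lemma mem_ancestorBlock {l : ℕ} {u v : Fin (k ^ m)} :
    v ∈ ancestorBlock k m l u ↔ (v : ℕ) / k ^ l = (u : ℕ) / k ^ l := by
  simp [ancestorBlock]

lemma ancestorBlock_zero (u : Fin (k ^ m)) : ancestorBlock k m 0 u = {u} := by
  ext v
  simp [Fin.val_inj]

lemma ancestorBlock_mono {l l' : ℕ} (h : l ≤ l') (u : Fin (k ^ m)) :
    ancestorBlock k m l u ⊆ ancestorBlock k m l' u := fun _ hv =>
  mem_ancestorBlock.2 (div_pow_eq_div_pow_of_le h (mem_ancestorBlock.1 hv))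

lemma card_ancestorBlock (hk : 0 < k) {l : ℕ} (hl : l ≤ m) (u : Fin (k ^ m)) :
    #(ancestorBlock k m l u) = k ^ l :=
  card_filter_fin_div_eq (pow_pos hk l) (succ_div_mul_le_of_dvd u.isLt (pow_dvd_pow k hl))

lemma lcaHeight_of_mem_ancestorBlock_succ_sdiff {l : ℕ} {u v : Fin (k ^ m)}
    (hv : v ∈ ancestorBlock k m (l + 1) u \ ancestorBlock k m l u) :
    (u : ℕ) ≠ v ∧ lcaHeight k u v = l + 1 := by
  simp only [mem_sdiff, mem_ancestorBlock] at hv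
  exact ⟨fun h => hv.2 (h ▸ rfl), lcaHeight_eq_succ hv.1.symm (Ne.symm hv.2)⟩

/-- At relative height `t + 1` above `u` the block has `k ^ (t + 1) - k ^ t` leaves. -/
lemma sum_ancestorBlock_ite_lcaHeight (hk : 0 < k) (a : ℝ) (g : ℕ → ℝ) {d : ℕ} (hd : d ≤ m)
    (u : Fin (k ^ m)) :
    ∑ v ∈ ancestorBlock k m d u, (if (u : ℕ) = v then a else g (lcaHeight k u v))
      = a + ∑ t ∈ range d, ((k : ℝ) ^ (t + 1) - (k : ℝ) ^ t) * g (t + 1) := by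
  induction d with
  | zero => simp [ancestorBlock_zero]
  | succ l ih =>
    have hsub := ancestorBlock_mono (Nat.le_add_right l 1) u
    have hshell : ∀ v ∈ ancestorBlock k m (l + 1) u \ ancestorBlock k m l u,
        (if (u : ℕ) = v then a else g (lcaHeight k u v)) = g (l + 1) := fun v hv => by
      obtain ⟨hne, hlca⟩ := lcaHeight_of_mem_ancestorBlock_succ_sdiff hv
      rw [if_neg hne, hlca]
    have hcard : (#(ancestorBlock k m (l + 1) u \ ancestorBlock k m l u) : ℝ)
        = (k : ℝ) ^ (l + 1) - (k : ℝ) ^ l := by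
      rw [card_sdiff_of_subset hsub, card_ancestorBlock hk hd, card_ancestorBlock hk (by omega),
        Nat.cast_sub (Nat.pow_le_pow_right hk (Nat.le_add_right l 1))]
      push_cast
      ring
    rw [← sum_sdiff hsub, ih (by omega), sum_congr rfl hshell, sum_const, nsmul_eq_mul, hcard,
      sum_range_succ]
    ring

end AncestorBlock

section TreeCov

variable {k m p r : ℕ} {ρ σ : ℝ}

lemma treeCov_comm (i j : Fin (k ^ m)) : treeCov k m ρ σ i j = treeCov k m ρ σ j i := by
  simp only [treeCov, Matrix.of_apply, eq_comm (a := (i : ℕ)), lcaHeight_comm k i j]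

@[simp]
lemma mem_treeBlock {u : Fin (k ^ m)} : u ∈ treeBlock k m p r ↔ (u : ℕ) / k ^ (m - p) = r := by
  simp [treeBlock]

lemma treeBlock_eq_ancestorBlock {u : Fin (k ^ m)} (hu : u ∈ treeBlock k m p r) :
    treeBlock k m p r = ancestorBlock k m (m - p) u := by
  ext v
  rw [mem_treeBlock] at hu ⊢
  rw [mem_ancestorBlock, hu]

lemma sum_treeCov_treeBlock (hk : 0 < k) {u : Fin (k ^ m)} (hu : u ∈ treeBlock k m p r) :
    ∑ v ∈ treeBlock k m p r, treeCov k m ρ σ u v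
      = σ ^ 2 + ∑ t ∈ range (m - p), ((k : ℝ) ^ (t + 1) - (k : ℝ) ^ t) *
          (σ ^ 2 * ρ * (1 / (k : ℝ) + (1 - 1 / (k : ℝ)) * ρ) ^ t) := by
  rw [treeBlock_eq_ancestorBlock hu]
  exact sum_ancestorBlock_ite_lcaHeight hk (σ ^ 2)
    (fun h => σ ^ 2 * ρ * (1 / (k : ℝ) + (1 - 1 / (k : ℝ)) * ρ) ^ (h - 1)) (Nat.sub_le m p) u

/-- A leaf outside a block has the same lowest common ancestor with every leaf of the block. -/
lemma treeCov_eq_of_mem_treeBlock {i j u : Fin (k ^ m)} (hi : i ∈ treeBlock k m p r)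
    (hu : u ∈ treeBlock k m p r) (hj : j ∉ treeBlock k m p r) :
    treeCov k m ρ σ j u = treeCov k m ρ σ j i := by
  rw [mem_treeBlock] at hi hu hj
  have hne : ∀ {w : Fin (k ^ m)}, (w : ℕ) / k ^ (m - p) = r → (j : ℕ) ≠ w :=
    fun hw h => hj (h ▸ hw)
  simp only [treeCov, Matrix.of_apply, if_neg (hne hu), if_neg (hne hi),
    lcaHeight_eq_of_div_pow_eq (hu.trans hi.symm) (hi ▸ hj)]

end TreeCov

theorem treeCov_condIndep_identity_general (k m : ℕ) (hk : 2 ≤ k) (σ ρ : ℝ) (p r : ℕ)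
    (i j : Fin (k ^ m)) (hi : i ∈ treeBlock k m p r) (hj : j ∉ treeBlock k m p r) :
    treeCov k m ρ σ i j *
        (∑ u ∈ treeBlock k m p r, ∑ v ∈ treeBlock k m p r, treeCov k m ρ σ u v)
      = (∑ u ∈ treeBlock k m p r, treeCov k m ρ σ i u) *
        (∑ u ∈ treeBlock k m p r, treeCov k m ρ σ j u) := by
  have hk0 : 0 < k := by omega
  have hrow : ∀ u ∈ treeBlock k m p r, ∑ v ∈ treeBlock k m p r, treeCov k m ρ σ u v
      = ∑ v ∈ treeBlock k m p r, treeCov k m ρ σ i v := fun u hu => by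
    rw [sum_treeCov_treeBlock hk0 hu, sum_treeCov_treeBlock hk0 hi]
  rw [sum_congr rfl hrow, sum_congr rfl fun u hu => treeCov_eq_of_mem_treeBlock hi hu hj,
    sum_const, sum_const, nsmul_eq_mul, nsmul_eq_mul, treeCov_comm i j]
  ring

/-- The conditional-independence identities satisfied by the tree covariance matrix: for any
inner level `1 ≤ p ≤ m - 1` (`m ≥ 2`), any block `J = J(p,r)`, any leaf `i ∈ J` and any
leaf `j ∉ J`, one has `C_{ij}·(∑_{u,v ∈ J} C_{uv}) = (∑_{u ∈ J} C_{iu})·(∑_{u ∈ J} C_{ju})`.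
For jointly normal leaves with covariance `C`, these identities encode that leaves inside and
outside a subtree are conditionally independent given the subtree sum. -/
theorem treeCov_condIndep_identity (k m : ℕ) (hk : 2 ≤ k) (hm : 2 ≤ m) (σ ρ : ℝ) (hσ : 0 < σ)
    (hρ_lb : -(1 / ((k : ℝ) - 1)) < ρ) (hρ_ub : ρ < 1)
    (p r : ℕ) (hp1 : 1 ≤ p) (hp2 : p ≤ m - 1) (hr : r < k ^ p)
    (i j : Fin (k ^ m)) (hi : i ∈ treeBlock k m p r) (hj : j ∉ treeBlock k m p r) :
    treeCov k m ρ σ i j *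
        (∑ u ∈ treeBlock k m p r, ∑ v ∈ treeBlock k m p r, treeCov k m ρ σ u v)
      = (∑ u ∈ treeBlock k m p r, treeCov k m ρ σ i u) *
        (∑ u ∈ treeBlock k m p r, treeCov k m ρ σ j u) :=
  treeCov_condIndep_identity_general k m hk σ ρ p r i j hi hj
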